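/- Let D be a positive integer with D ≡ 6 (mod 16), and let ρ′ be the ℚ-algebra homomorphism from Q = (−2, D)_ℚ into 2×2 complex matrices determined by ρ′(i) = [[√−2, 2√−2·B/A],[0, −√−2]] and ρ′(j) = [[−B, (D − B²)/A],[A, B]] with A = 4 and B = 2 − √−2. Then the set {α ∈ Q : all four entries of ρ′(α) lie in O₂} is exactly the ℤ-submodule of Q spanned by 1, i, (i + j + ij)/4, and (2 + 2i + ij)/4; i.e. this set is the ℤ-order ℤ[1, i, (i+j+ij)/4, (2+2i+ij)/4]. -/

import Mathlib

open Quaternion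

/-- √−2 : the complex number with square −2 and positive imaginary part. -/
noncomputable def sqrtNeg2 : ℂ := Real.sqrt 2 * Complex.I

/-- Membership in the ring O₂ = ℤ[√−2] ⊆ ℂ. -/
def InO2 (a : ℂ) : Prop := ∃ m n : ℤ, a = (m : ℂ) + (n : ℂ) * sqrtNeg2

lemma hs2 : sqrtNeg2 ^ 2 = -2 := by
  simp [sqrtNeg2, mul_pow, Complex.I_sq]
  norm_cast
  rw [Real.sq_sqrt] <;> norm_num

lemma inO2_add {a b : ℂ} (ha : InO2 a) (hb : InO2 b) : InO2 (a + b) := by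
  obtain ⟨m, n, rfl⟩ := ha; obtain ⟨m', n', rfl⟩ := hb
  exact ⟨m + m', n + n', by push_cast; ring⟩

lemma inO2_zsmul {a : ℂ} (c : ℤ) (ha : InO2 a) : InO2 (c • a) := by
  obtain ⟨m, n, rfl⟩ := ha
  exact ⟨c * m, c * n, by push_cast [zsmul_eq_mul]; ring⟩

lemma inO2_iff (p q : ℚ) : InO2 ((p:ℂ) + (q:ℂ) * sqrtNeg2) ↔ (∃ m : ℤ, p = m) ∧ (∃ n : ℤ, q = n) := by
  constructor
  · rintro ⟨m, n, h⟩
    rw [Complex.ext_iff] at h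
    simp [sqrtNeg2] at h
    obtain ⟨h1, h2⟩ := h
    exact ⟨⟨m, by exact_mod_cast h1⟩, ⟨n, by exact_mod_cast h2⟩⟩
  · rintro ⟨⟨m, hm⟩, ⟨n, hn⟩⟩
    exact ⟨m, n, by rw [hm, hn]; push_cast; ring⟩

lemma decomp (a b : ℚ) (x y z w : ℚ) :
    (⟨x,y,z,w⟩ : ℍ[ℚ, a, b]) =
      x • 1 + y • ⟨0,1,0,0⟩ + z • ⟨0,0,1,0⟩ + w • (⟨0,1,0,0⟩ * ⟨0,0,1,0⟩) := by
  ext <;> simp [QuaternionAlgebra.re_mul, QuaternionAlgebra.imI_mul,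
    QuaternionAlgebra.imJ_mul, QuaternionAlgebra.imK_mul]

lemma entries (D : ℚ) (ρ' : ℍ[ℚ, -2, D] →ₐ[ℚ] Matrix (Fin 2) (Fin 2) ℂ)
    (hi : ρ' (⟨0, 1, 0, 0⟩) =
      !![sqrtNeg2, 2 * sqrtNeg2 * (2 - sqrtNeg2) / (4 : ℂ); 0, -sqrtNeg2])
    (hj : ρ' (⟨0, 0, 1, 0⟩) =
      !![-(2 - sqrtNeg2), ((D : ℂ) - (2 - sqrtNeg2) ^ 2) / (4 : ℂ); (4 : ℂ), (2 - sqrtNeg2)])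
    (x y z w : ℚ) :
    ρ' ⟨x,y,z,w⟩ =
      !![((x - 2*z + 2*w : ℚ):ℂ) + ((y + z + 2*w : ℚ):ℂ) * sqrtNeg2,
         ((y + (D-2)/4*z + 2*w : ℚ):ℂ) + ((y + z + (D+2)/4*w : ℚ):ℂ) * sqrtNeg2;
         ((4*z:ℚ):ℂ) + ((-4*w:ℚ):ℂ)*sqrtNeg2,
         ((x + 2*z - 2*w:ℚ):ℂ) + ((-(y+z+2*w):ℚ):ℂ)*sqrtNeg2] := by
  rw [decomp, map_add, map_add, map_add, map_smul, map_smul, map_smul, map_smul,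
    map_one, map_mul, hi, hj]
  ext k l
  fin_cases k <;> fin_cases l <;>
    simp [Matrix.mul_apply, Fin.sum_univ_two, Matrix.smul_apply, Matrix.one_apply, Rat.smul_def] <;>
    push_cast
  · linear_combination (-(w:ℂ)) * hs2
  · linear_combination ((-(y:ℂ)/2 - (z:ℂ)/4 - w) + ((w:ℂ)/4) * sqrtNeg2) * hs2
  · ring
  · linear_combination ((w:ℂ)) * hs2

/-- For D ≡ 6 (mod 16), with A = 4, B = 2 − √−2, the entries-in-O₂ set is the ℤ-order ℤ[1, i, (i+j+ij)/4, (2+2i+ij)/4]. -/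
theorem stmt_7 (D : ℤ) (hD : 0 < D) (hmod : D % 16 = 6)
    (ρ' : ℍ[ℚ, -2, (D : ℚ)] →ₐ[ℚ] Matrix (Fin 2) (Fin 2) ℂ)
    (hi : ρ' (⟨0, 1, 0, 0⟩ : ℍ[ℚ, -2, (D : ℚ)]) =
      !![sqrtNeg2, 2 * sqrtNeg2 * (2 - sqrtNeg2) / (4 : ℂ); 0, -sqrtNeg2])
    (hj : ρ' (⟨0, 0, 1, 0⟩ : ℍ[ℚ, -2, (D : ℚ)]) =
      !![-(2 - sqrtNeg2), ((D : ℂ) - (2 - sqrtNeg2) ^ 2) / (4 : ℂ); (4 : ℂ), (2 - sqrtNeg2)]) :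
    {α : ℍ[ℚ, -2, (D : ℚ)] | ∀ k l : Fin 2, InO2 (ρ' α k l)} =
    (Submodule.span ℤ
      ({1, ⟨0, 1, 0, 0⟩, ⟨0, 1/4, 1/4, 1/4⟩, ⟨1/2, 1/2, 0, 1/4⟩} :
        Set ℍ[ℚ, -2, (D : ℚ)]) : Set ℍ[ℚ, -2, (D : ℚ)]) := by
  have hE := entries (D : ℚ) ρ' hi hj
  obtain ⟨K, hK⟩ : ∃ K : ℤ, D = 16 * K + 6 := ⟨D / 16, by omega⟩
  have hKq : (D : ℚ) = 16 * K + 6 := by exact_mod_cast hK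
  ext α
  simp only [Set.mem_setOf_eq, SetLike.mem_coe]
  constructor
  · intro h
    obtain ⟨x, y, z, w⟩ := α
    have h10 : InO2 (((4*z:ℚ):ℂ) + ((-4*w:ℚ):ℂ)*sqrtNeg2) := by
      have := h 1 0; rw [hE x y z w] at this; exact this
    have h11 : InO2 (((x + 2*z - 2*w:ℚ):ℂ) + ((-(y+z+2*w):ℚ):ℂ)*sqrtNeg2) := by
      have := h 1 1; rw [hE x y z w] at this; exact this
    rw [inO2_iff] at h10 h11
    obtain ⟨⟨c, hc⟩, ⟨nw, hnw⟩⟩ := h10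
    obtain ⟨⟨a, ha⟩, ⟨nb, hnb⟩⟩ := h11
    set d : ℤ := -nw - c with hd
    set b : ℤ := -nb - c - d with hb
    have hd' : (d : ℚ) = -nw - c := by push_cast [hd]; ring
    have hb' : (b : ℚ) = -nb - c - d := by push_cast [hb]; ring
    have hmem : (⟨x,y,z,w⟩ : ℍ[ℚ, -2, (D:ℚ)]) =
        a • (1 : ℍ[ℚ, -2, (D:ℚ)]) + b • (⟨0,1,0,0⟩ : ℍ[ℚ, -2, (D:ℚ)])
          + c • (⟨0,1/4,1/4,1/4⟩ : ℍ[ℚ, -2, (D:ℚ)]) + d • (⟨1/2,1/2,0,1/4⟩ : ℍ[ℚ, -2, (D:ℚ)]) := by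
      ext <;>
        simp [QuaternionAlgebra.re_smul, QuaternionAlgebra.imI_smul,
          QuaternionAlgebra.imJ_smul, QuaternionAlgebra.imK_smul, zsmul_eq_mul] <;>
        linarith [hc, hnw, ha, hnb, hd', hb']
    rw [hmem]
    refine Submodule.add_mem _ (Submodule.add_mem _ (Submodule.add_mem _ ?_ ?_) ?_) ?_ <;>
      exact Submodule.smul_mem _ _ (Submodule.subset_span (by simp))
  · intro h
    induction h using Submodule.span_induction with
    | mem g hg =>
      simp only [Set.mem_insert_iff, Set.mem_singleton_iff] at hg
      rcases hg with rfl | rfl | rfl | rfl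
      · intro k l
        rw [show (1 : ℍ[ℚ, -2, (D:ℚ)]) = ⟨1,0,0,0⟩ from rfl, hE]
        fin_cases k <;> fin_cases l
        · exact (inO2_iff _ _).2 ⟨⟨1, by norm_num⟩, ⟨0, by norm_num⟩⟩
        · exact (inO2_iff _ _).2 ⟨⟨0, by norm_num⟩, ⟨0, by norm_num⟩⟩
        · exact (inO2_iff _ _).2 ⟨⟨0, by norm_num⟩, ⟨0, by norm_num⟩⟩
        · exact (inO2_iff _ _).2 ⟨⟨1, by norm_num⟩, ⟨0, by norm_num⟩⟩
      · intro k l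
        rw [hE]
        fin_cases k <;> fin_cases l
        · exact (inO2_iff _ _).2 ⟨⟨0, by norm_num⟩, ⟨1, by norm_num⟩⟩
        · exact (inO2_iff _ _).2 ⟨⟨1, by norm_num⟩, ⟨1, by norm_num⟩⟩
        · exact (inO2_iff _ _).2 ⟨⟨0, by norm_num⟩, ⟨0, by norm_num⟩⟩
        · exact (inO2_iff _ _).2 ⟨⟨0, by norm_num⟩, ⟨-1, by norm_num⟩⟩
      · intro k l
        rw [hE]
        fin_cases k <;> fin_cases l
        · exact (inO2_iff _ _).2 ⟨⟨0, by norm_num⟩, ⟨1, by norm_num⟩⟩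
        · exact (inO2_iff _ _).2 ⟨⟨K+1, by rw [hKq]; push_cast; ring⟩,
            ⟨K+1, by rw [hKq]; push_cast; ring⟩⟩
        · exact (inO2_iff _ _).2 ⟨⟨1, by norm_num⟩, ⟨-1, by norm_num⟩⟩
        · exact (inO2_iff _ _).2 ⟨⟨0, by norm_num⟩, ⟨-1, by norm_num⟩⟩
      · intro k l
        rw [hE]
        fin_cases k <;> fin_cases l
        · exact (inO2_iff _ _).2 ⟨⟨1, by norm_num⟩, ⟨1, by norm_num⟩⟩
        · exact (inO2_iff _ _).2 ⟨⟨1, by norm_num⟩,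
            ⟨K+1, by rw [hKq]; push_cast; ring⟩⟩
        · exact (inO2_iff _ _).2 ⟨⟨0, by norm_num⟩, ⟨-1, by norm_num⟩⟩
        · exact (inO2_iff _ _).2 ⟨⟨0, by norm_num⟩, ⟨-1, by norm_num⟩⟩
    | zero =>
      intro k l
      rw [map_zero]
      exact ⟨0, 0, by simp⟩
    | add u v _ _ hu hv =>
      intro k l
      rw [map_add]
      exact inO2_add (hu k l) (hv k l)
    | smul c u _ hu =>
      intro k l
      rw [map_zsmul]
      exact inO2_zsmul c (hu k l)
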